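/- Let a be a positive, decreasing, summable sequence and C_a the associated Cantor set. Then dim_L C_a = 0 if and only if inf_k s_{k+1}/s_k = 0. In particular, if a is a doubling sequence, then dim_L C_a > 0. -/

import Mathlib

open scoped BigOperators
open Set

/-- `coverNum r F` is the minimal number of closed balls of radius `r`
needed to cover `F`. -/
noncomputable def coverNum (r : ℝ) (F : Set ℝ) : ℕ :=
  sInf {n : ℕ | ∃ S : Finset ℝ, S.card = n ∧ F ⊆ ⋃ x ∈ S, Metric.closedBall x r}

/-- The Assouad dimension of a set `F ⊆ ℝ`. -/
noncomputable def dimA (F : Set ℝ) : ℝ :=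
  sInf {α : ℝ | ∃ c > (0 : ℝ), ∃ ρ > (0 : ℝ), ∀ x ∈ F, ∀ r R : ℝ,
    0 < r → r < R → R < ρ →
    (coverNum r (Metric.closedBall x R ∩ F) : ℝ) ≤ c * (R / r) ^ α}

/-- The Lower Assouad dimension of a set `F ⊆ ℝ`. -/
noncomputable def dimL (F : Set ℝ) : ℝ :=
  sSup {α : ℝ | ∃ c > (0 : ℝ), ∃ ρ > (0 : ℝ), ∀ x ∈ F, ∀ r R : ℝ,
    0 < r → r < R → R < ρ →
    c * (R / r) ^ α ≤ (coverNum r (Metric.closedBall x R ∩ F) : ℝ)}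

/-- `E` is a complementary set of the (positive, summable) sequence `a`,
i.e. `E ∈ 𝒞_a`:  `E = [0, L] \ ⋃ U n` where the `U n` are disjoint open
intervals in `[0, L]` with `U n` of length `a n`, and `L = ∑ a`. -/
def IsComplementarySet (a : ℕ → ℝ) (E : Set ℝ) : Prop :=
  ∃ U : ℕ → Set ℝ,
    (∀ n, ∃ p q : ℝ, p < q ∧ q - p = a n ∧ U n = Set.Ioo p q) ∧
    (∀ n, U n ⊆ Set.Icc 0 (∑' i, a i)) ∧
    Pairwise (Function.onFun Disjoint U) ∧
    E = Set.Icc 0 (∑' i, a i) \ ⋃ n, U n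

/-- The decreasing complementary set `D_a = {∑_{i ≥ k} a i : k} ∪ {0}`,
obtained by placing the gaps in order from right to left starting at `L`. -/
noncomputable def decSet (a : ℕ → ℝ) : Set ℝ :=
  {0} ∪ {x : ℝ | ∃ k : ℕ, x = ∑' i : ℕ, a (k + i)}

/-- Length of the `j`-th closed interval (0-indexed, `j < 2 ^ k`) at step `k`
of the construction of the Cantor set associated to the gap sequence `a`:
it is the total length of all the gaps to be removed from that interval. -/
noncomputable def cantorLen (a : ℕ → ℝ) (k j : ℕ) : ℝ :=
  ∑' m : ℕ, ∑ i ∈ Finset.range (2 ^ m), a (2 ^ (k + m) - 1 + 2 ^ m * j + i)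

/-- Left endpoint of the `j`-th closed interval (0-indexed, `j < 2 ^ k`) at
step `k` of the construction of the Cantor set associated to `a`:  removing
from each step-`k` interval `I_j^k` the open gap of length `a (2 ^ k - 1 + j)`
produces the two step-`(k+1)` intervals `I_{2j}^{k+1}` and `I_{2j+1}^{k+1}`. -/
noncomputable def cantorLeft (a : ℕ → ℝ) : ℕ → ℕ → ℝ
  | 0, _ => 0
  | k + 1, j =>
    if j % 2 = 0 then cantorLeft a k (j / 2)
    else cantorLeft a k (j / 2) + cantorLen a (k + 1) (j - 1) + a (2 ^ k - 1 + j / 2)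

/-- The Cantor set `C_a` associated to the gap sequence `a`. -/
noncomputable def assocCantor (a : ℕ → ℝ) : Set ℝ :=
  ⋂ k : ℕ, ⋃ j ∈ Finset.range (2 ^ k),
    Set.Icc (cantorLeft a k j) (cantorLeft a k j + cantorLen a k j)

/-- `avgLen a n = s_n^{(a)} = 2 ^ (-n) ∑_{j ≥ 2 ^ n - 1} a j`, the average length of
the step-`n` intervals of `C_a` (with `a` 0-indexed, so this matches
`2^{-n} Σ_{j=2^n}^∞ a_j` for the 1-indexed sequence of the paper). -/
noncomputable def avgLen (a : ℕ → ℝ) (n : ℕ) : ℝ :=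
  (∑' j : ℕ, a (2 ^ n - 1 + j)) / 2 ^ n

/-- The gap sequence of the central Cantor set with ratio sequence `r`
(0-indexed): the gap `a i` has length `r 0 ⋯ r (n-1) * (1 - 2 * r n)` where
`2 ^ n - 1 ≤ i ≤ 2 ^ (n+1) - 2`, i.e. `n = log₂ (i + 1)`.  The central Cantor
set `C{r_j}` itself is `assocCantor (centralGaps r)`. -/
noncomputable def centralGaps (r : ℕ → ℝ) (i : ℕ) : ℝ :=
  (∏ j ∈ Finset.range (Nat.log 2 (i + 1)), r j) * (1 - 2 * r (Nat.log 2 (i + 1)))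

/-- A decreasing sequence `a` is doubling if `a n ≤ τ * a (2 * n)` (1-indexed)
for some constant `τ`; with 0-indexing this reads `a n ≤ τ * a (2 * n + 1)`. -/
def IsDoubling (a : ℕ → ℝ) : Prop :=
  ∃ τ : ℝ, ∀ n : ℕ, a n ≤ τ * a (2 * n + 1)

/-- A general sequence is doubling if its decreasing rearrangement is. -/
def IsDoublingGen (a : ℕ → ℝ) : Prop :=
  ∃ σ : Equiv.Perm ℕ, Antitone (a ∘ σ) ∧ IsDoubling (a ∘ σ)

/-!
Since `a` is decreasing, every step-`(k+1)` interval of `C_a` has length between `s_{k+2}` and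
`s_k`, and `s_{k+1} < s_k / 2`.

If `s_{k+1} ≥ γ s_k` for all `k`, a ball `B(x, R)` with `s_{p+1} ≤ R < s_p` contains a whole
step-`(p+2)` interval around `x`, whose `2 ^ t` descendants of step `p + 2 + t` have `2 r`-separated
left endpoints in `C_a` as long as `s_{p+3+t} > 2 r`. Counting them gives
`N_r(B(x, R) ∩ C_a) ≳ 2 ^ t ≳ (R / r) ^ α` with `α = log 2 / log (2 / γ) > 0`.

If instead `s_{k+1} / s_k` is arbitrarily small (also for large `k`, since all ratios are
positive), then `B(0, s_k / 2) ∩ C_a` lies in `I_0^{k-1}` and is covered by `8` balls of radius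
`s_{k+1}`, although `s_k / s_{k+1}` is unbounded; so no positive exponent is admissible.

For a doubling sequence, summing `a n ≤ τ a (2 n + 1)` over the gaps of steps `≥ k` gives
`s_{k+1} ≥ s_k / (2 τ)`.
-/

open Filter Topology

variable {a : ℕ → ℝ}

lemma Antitone.nonneg_of_summable (hdec : Antitone a) (hsum : Summable a) (n : ℕ) : 0 ≤ a n :=
  hdec.le_of_tendsto hsum.tendsto_atTop_zero n

/-- The total length of the gaps removed at the steps `≥ n`, i.e. of those with index
`≥ 2 ^ n - 1`. -/
noncomputable def gapTail (a : ℕ → ℝ) (n : ℕ) : ℝ :=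
  ∑' j, a (2 ^ n - 1 + j)

/-- The total length of the `2 ^ n` gaps removed at step `n`. -/
noncomputable def stepGaps (a : ℕ → ℝ) (n : ℕ) : ℝ :=
  ∑ j ∈ Finset.range (2 ^ n), a (2 ^ n - 1 + j)

/-- The total length of the gaps removed at step `k + m` inside `I_j^k`, so that
`cantorLen a k j = ∑' m, descGaps a k j m`. -/
noncomputable def descGaps (a : ℕ → ℝ) (k j m : ℕ) : ℝ :=
  ∑ i ∈ Finset.range (2 ^ m), a (2 ^ (k + m) - 1 + 2 ^ m * j + i)

lemma avgLen_eq_gapTail_div (n : ℕ) : avgLen a n = gapTail a n / 2 ^ n := rfl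

lemma cantorLen_eq_tsum_descGaps (k j : ℕ) : cantorLen a k j = ∑' m, descGaps a k j m := rfl

-- No summability is needed: a non-summable `a` has junk tails `∑' = 0`.
lemma tendsto_gapTail : Tendsto (gapTail a) atTop (𝓝 0) := by
  have hshift : Tendsto (fun n => 2 ^ n - 1) atTop atTop :=
    tendsto_atTop_mono (fun n => show n ≤ 2 ^ n - 1 by have := n.lt_two_pow_self; omega)
      tendsto_id
  refine ((tendsto_sum_nat_add a).comp hshift).congr fun n => ?_
  simp only [Function.comp_apply, gapTail, add_comm]

lemma tendsto_avgLen : Tendsto (avgLen a) atTop (𝓝 0) :=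
  tendsto_gapTail.div_atTop (tendsto_pow_atTop_atTop_of_one_lt one_lt_two)

section Tails

variable (hsum : Summable a)
include hsum

lemma gapTail_eq_stepGaps_add (n : ℕ) : gapTail a n = stepGaps a n + gapTail a (n + 1) := by
  have htail : Summable fun j => a (2 ^ n - 1 + j) := hsum.comp_injective (add_right_injective _)
  rw [gapTail, ← htail.sum_add_tsum_nat_add (2 ^ n), stepGaps, gapTail]
  congr 2 with j
  have := Nat.one_le_two_pow (n := n)
  rw [pow_succ]
  congr 1
  omega

lemma sum_stepGaps (n M : ℕ) :
    ∑ m ∈ Finset.range M, stepGaps a (n + m) = gapTail a n - gapTail a (n + M) := by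
  induction M with
  | zero => simp
  | succ M ih =>
    rw [Finset.sum_range_succ, ih, gapTail_eq_stepGaps_add hsum (n + M), ← add_assoc]
    ring

lemma hasSum_stepGaps (ha : ∀ n, 0 ≤ a n) (n : ℕ) :
    HasSum (fun m => stepGaps a (n + m)) (gapTail a n) := by
  have hnonneg : ∀ m, 0 ≤ stepGaps a (n + m) := fun m => Finset.sum_nonneg fun j _ => ha _
  rw [hasSum_iff_tendsto_nat_of_nonneg hnonneg]
  simp_rw [sum_stepGaps hsum]
  have htail : Tendsto (fun M => gapTail a (n + M)) atTop (𝓝 0) :=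
    ((tendsto_gapTail (a := a)).comp (tendsto_add_atTop_nat n)).congr fun M => by simp [add_comm]
  simpa using tendsto_const_nhds.sub htail

variable (hpos : ∀ n, 0 < a n)
include hpos

lemma gapTail_pos (n : ℕ) : 0 < gapTail a n :=
  (hsum.comp_injective (add_right_injective _)).tsum_pos (fun _ => (hpos _).le) 0 (hpos _)

lemma avgLen_pos (n : ℕ) : 0 < avgLen a n :=
  div_pos (gapTail_pos hsum hpos n) (by positivity)

lemma avgLen_succ_lt_half (n : ℕ) : avgLen a (n + 1) < avgLen a n / 2 := by
  have hstep : 0 < stepGaps a n :=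
    Finset.sum_pos (fun _ _ => hpos _) (Finset.nonempty_range_iff.mpr (by positivity))
  rw [avgLen_eq_gapTail_div, avgLen_eq_gapTail_div, div_div, ← pow_succ]
  gcongr
  linarith [gapTail_eq_stepGaps_add hsum n]

end Tails

section GapBounds

variable (hdec : Antitone a)
include hdec

lemma descGaps_le (k j m : ℕ) : descGaps a k j m ≤ 2 ^ m * a (2 ^ (k + m) - 1) := by
  calc descGaps a k j m ≤ ∑ _i ∈ Finset.range (2 ^ m), a (2 ^ (k + m) - 1) :=
        Finset.sum_le_sum fun i _ => hdec (by omega)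
    _ = 2 ^ m * a (2 ^ (k + m) - 1) := by simp

lemma pow_mul_le_descGaps {k j : ℕ} (hj : j < 2 ^ k) (m : ℕ) :
    2 ^ m * a (2 ^ (k + m + 1) - 2) ≤ descGaps a k j m := by
  have hjm : 2 ^ m * j + 2 ^ m ≤ 2 ^ (k + m) := by
    rw [← mul_add_one, pow_add, mul_comm (2 ^ k)]
    exact Nat.mul_le_mul_left _ hj
  calc 2 ^ m * a (2 ^ (k + m + 1) - 2) = ∑ _i ∈ Finset.range (2 ^ m), a (2 ^ (k + m + 1) - 2) := by
        simp
    _ ≤ descGaps a k j m := Finset.sum_le_sum fun i hi => hdec (by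
        rw [Finset.mem_range] at hi
        rw [pow_succ]
        omega)

lemma pow_mul_le_stepGaps (n : ℕ) : 2 ^ n * a (2 ^ (n + 1) - 1) ≤ stepGaps a n := by
  calc 2 ^ n * a (2 ^ (n + 1) - 1) = ∑ _i ∈ Finset.range (2 ^ n), a (2 ^ (n + 1) - 1) := by simp
    _ ≤ stepGaps a n := Finset.sum_le_sum fun i hi => hdec (by
        rw [Finset.mem_range] at hi
        rw [pow_succ]
        omega)

lemma stepGaps_le (n : ℕ) : stepGaps a n ≤ 2 ^ n * a (2 ^ n - 2) := by
  calc stepGaps a n ≤ ∑ _i ∈ Finset.range (2 ^ n), a (2 ^ n - 2) :=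
        Finset.sum_le_sum fun i _ => hdec (by omega)
    _ = 2 ^ n * a (2 ^ n - 2) := by simp

lemma descGaps_succ_le_stepGaps (k j m : ℕ) : descGaps a k j (m + 1) ≤ 2 * stepGaps a m := by
  have hidx : 2 ^ (m + 1) - 1 ≤ 2 ^ (k + (m + 1)) - 1 :=
    Nat.sub_le_sub_right (Nat.pow_le_pow_right two_pos (by omega)) 1
  calc descGaps a k j (m + 1) ≤ 2 ^ (m + 1) * a (2 ^ (k + (m + 1)) - 1) := descGaps_le hdec k j _
    _ ≤ 2 * (2 ^ m * a (2 ^ (m + 1) - 1)) := by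
        rw [pow_succ, mul_comm _ (2 : ℝ), mul_assoc]
        gcongr
        exact hdec hidx
    _ ≤ 2 * stepGaps a m := by gcongr; exact pow_mul_le_stepGaps hdec m

lemma pow_mul_descGaps_le_stepGaps (k j m : ℕ) :
    2 ^ k * descGaps a (k + 1) j m ≤ stepGaps a (k + m) := by
  calc 2 ^ k * descGaps a (k + 1) j m ≤ 2 ^ k * (2 ^ m * a (2 ^ (k + 1 + m) - 1)) := by
        gcongr; exact descGaps_le hdec _ _ _
    _ = 2 ^ (k + m) * a (2 ^ (k + m + 1) - 1) := by ring_nf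
    _ ≤ stepGaps a (k + m) := pow_mul_le_stepGaps hdec _

lemma stepGaps_le_pow_mul_descGaps {k j : ℕ} (hj : j < 2 ^ k) (m : ℕ) :
    stepGaps a (k + 1 + m) ≤ 2 ^ (k + 1) * descGaps a k j m := by
  calc stepGaps a (k + 1 + m) ≤ 2 ^ (k + 1 + m) * a (2 ^ (k + 1 + m) - 2) := stepGaps_le hdec _
    _ = 2 ^ (k + 1) * (2 ^ m * a (2 ^ (k + m + 1) - 2)) := by ring_nf
    _ ≤ 2 ^ (k + 1) * descGaps a k j m := by gcongr; exact pow_mul_le_descGaps hdec hj m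

variable (hsum : Summable a)
include hsum

lemma summable_descGaps (k j : ℕ) : Summable (descGaps a k j) := by
  have ha := hdec.nonneg_of_summable hsum
  rw [← summable_nat_add_iff 1]
  refine Summable.of_nonneg_of_le (fun m => Finset.sum_nonneg fun i _ => ha _)
    (descGaps_succ_le_stepGaps hdec k j) ?_
  simpa using ((hasSum_stepGaps hsum ha 0).summable.mul_left 2)

lemma cantorLen_succ_le_avgLen (k j : ℕ) : cantorLen a (k + 1) j ≤ avgLen a k := by
  rw [avgLen_eq_gapTail_div, le_div_iff₀ (by positivity), mul_comm]
  exact hasSum_le (pow_mul_descGaps_le_stepGaps hdec k j)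
    ((summable_descGaps hdec hsum _ j).hasSum.mul_left _)
    (hasSum_stepGaps hsum (hdec.nonneg_of_summable hsum) k)

lemma avgLen_succ_le_cantorLen {k j : ℕ} (hj : j < 2 ^ k) : avgLen a (k + 1) ≤ cantorLen a k j := by
  rw [avgLen_eq_gapTail_div, div_le_iff₀ (by positivity), mul_comm]
  exact hasSum_le (stepGaps_le_pow_mul_descGaps hdec hj)
    (hasSum_stepGaps hsum (hdec.nonneg_of_summable hsum) (k + 1))
    ((summable_descGaps hdec hsum k j).hasSum.mul_left _)

end GapBounds

/-- The step-`k` interval `I_j^k`, with `j` 0-indexed. -/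
def cantorInterval (a : ℕ → ℝ) (k j : ℕ) : Set ℝ :=
  Icc (cantorLeft a k j) (cantorLeft a k j + cantorLen a k j)

lemma exists_mem_cantorInterval {x : ℝ} (hx : x ∈ assocCantor a) (k : ℕ) :
    ∃ j < 2 ^ k, x ∈ cantorInterval a k j := by
  have hxk := mem_iInter.mp hx k
  simp only [mem_iUnion, Finset.mem_range, exists_prop] at hxk
  exact hxk

lemma descGaps_zero (k j : ℕ) : descGaps a k j 0 = a (2 ^ k - 1 + j) := by
  simp [descGaps]

lemma descGaps_succ (k j m : ℕ) :
    descGaps a k j (m + 1) = descGaps a (k + 1) (2 * j) m + descGaps a (k + 1) (2 * j + 1) m := by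
  rw [descGaps, pow_succ, mul_two, Finset.sum_range_add]
  congr 1 <;> refine Finset.sum_congr rfl fun i _ => congrArg a ?_ <;>
    rw [show k + (m + 1) = k + 1 + m by omega] <;> ring_nf

lemma cantorLeft_succ_two_mul (k j : ℕ) : cantorLeft a (k + 1) (2 * j) = cantorLeft a k j := by
  simp [cantorLeft]

lemma cantorLeft_succ_two_mul_add_one (k j : ℕ) :
    cantorLeft a (k + 1) (2 * j + 1)
      = cantorLeft a k j + cantorLen a (k + 1) (2 * j) + a (2 ^ k - 1 + j) := by
  simp [cantorLeft, Nat.add_div]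

lemma cantorLeft_add_pow_mul (k t j : ℕ) : cantorLeft a (k + t) (2 ^ t * j) = cantorLeft a k j := by
  induction t with
  | zero => simp
  | succ t ih => rw [← add_assoc, pow_succ', mul_assoc, cantorLeft_succ_two_mul, ih]

lemma cantorLeft_zero_right (k : ℕ) : cantorLeft a k 0 = 0 := by
  simpa [cantorLeft] using cantorLeft_add_pow_mul (a := a) 0 k 0

section Nesting

variable (hdec : Antitone a) (hsum : Summable a)
include hdec hsum

lemma cantorLen_eq_add (k j : ℕ) :
    cantorLen a k j
      = a (2 ^ k - 1 + j) + cantorLen a (k + 1) (2 * j) + cantorLen a (k + 1) (2 * j + 1) := by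
  rw [cantorLen_eq_tsum_descGaps, (summable_descGaps hdec hsum k j).tsum_eq_zero_add,
    tsum_congr (descGaps_succ k j), (summable_descGaps hdec hsum _ _).tsum_add
    (summable_descGaps hdec hsum _ _), descGaps_zero, add_assoc]
  rfl

lemma cantorLen_nonneg (k j : ℕ) : 0 ≤ cantorLen a k j :=
  tsum_nonneg fun _ => Finset.sum_nonneg fun _ _ => hdec.nonneg_of_summable hsum _

lemma cantorLeft_mem_cantorInterval (k j : ℕ) : cantorLeft a k j ∈ cantorInterval a k j :=
  ⟨le_rfl, le_add_of_nonneg_right (cantorLen_nonneg hdec hsum k j)⟩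

lemma cantorLeft_add_cantorLen_succ_eq (k j : ℕ) :
    cantorLeft a (k + 1) (2 * j + 1) + cantorLen a (k + 1) (2 * j + 1)
      = cantorLeft a k j + cantorLen a k j := by
  rw [cantorLeft_succ_two_mul_add_one, cantorLen_eq_add hdec hsum k j]
  ring

lemma cantorInterval_succ_subset (k i : ℕ) :
    cantorInterval a (k + 1) i ⊆ cantorInterval a k (i / 2) := by
  have ha := hdec.nonneg_of_summable hsum
  obtain ⟨j, rfl | rfl⟩ := Nat.even_or_odd' i
  · rw [Nat.mul_div_cancel_left j two_pos]
    refine Icc_subset_Icc (cantorLeft_succ_two_mul k j).ge ?_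
    rw [cantorLeft_succ_two_mul, cantorLen_eq_add hdec hsum k j]
    linarith [ha (2 ^ k - 1 + j), cantorLen_nonneg hdec hsum (k + 1) (2 * j + 1)]
  · rw [show (2 * j + 1) / 2 = j by omega]
    refine Icc_subset_Icc ?_ (cantorLeft_add_cantorLen_succ_eq hdec hsum k j).le
    rw [cantorLeft_succ_two_mul_add_one]
    linarith [ha (2 ^ k - 1 + j), cantorLen_nonneg hdec hsum (k + 1) (2 * j)]

lemma cantorInterval_add_subset (k t i : ℕ) :
    cantorInterval a (k + t) i ⊆ cantorInterval a k (i / 2 ^ t) := by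
  induction t generalizing i with
  | zero => simp
  | succ t ih =>
    rw [← add_assoc, pow_succ', ← Nat.div_div_eq_div_mul]
    exact (cantorInterval_succ_subset hdec hsum _ i).trans (ih _)

lemma cantorLeft_add_cantorLen_le_succ (k : ℕ) {j : ℕ} (hj : j + 1 < 2 ^ k) :
    cantorLeft a k j + cantorLen a k j ≤ cantorLeft a k (j + 1) := by
  induction k generalizing j with
  | zero => simp at hj
  | succ k ih =>
    obtain ⟨i, rfl | rfl⟩ := Nat.even_or_odd' j
    · rw [cantorLeft_succ_two_mul_add_one, cantorLeft_succ_two_mul]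
      linarith [hdec.nonneg_of_summable hsum (2 ^ k - 1 + i)]
    · rw [cantorLeft_add_cantorLen_succ_eq hdec hsum, show 2 * i + 1 + 1 = 2 * (i + 1) by ring,
        cantorLeft_succ_two_mul]
      exact ih (by rw [pow_succ] at hj; omega)

lemma cantorLeft_add_cantorLen_le {k j j' : ℕ} (hjj' : j < j') (hj' : j' < 2 ^ k) :
    cantorLeft a k j + cantorLen a k j ≤ cantorLeft a k j' := by
  induction j', hjj' using Nat.le_induction with
  | base => exact cantorLeft_add_cantorLen_le_succ hdec hsum k hj'
  | succ j' hjj' ih =>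
    linarith [ih (by omega), cantorLen_nonneg hdec hsum k j',
      cantorLeft_add_cantorLen_le_succ hdec hsum k hj']

lemma cantorLeft_mono {k j j' : ℕ} (hjj' : j ≤ j') (hj' : j' < 2 ^ k) :
    cantorLeft a k j ≤ cantorLeft a k j' := by
  rcases hjj'.lt_or_eq with hlt | rfl
  · linarith [cantorLeft_add_cantorLen_le hdec hsum hlt hj', cantorLen_nonneg hdec hsum k j]
  · exact le_rfl

lemma cantorLeft_mem_assocCantor {k j : ℕ} (hj : j < 2 ^ k) : cantorLeft a k j ∈ assocCantor a := by
  refine mem_iInter.mpr fun p => ?_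
  simp only [mem_iUnion, Finset.mem_range, exists_prop]
  rcases le_total k p with hkp | hpk
  · obtain ⟨t, rfl⟩ := Nat.exists_eq_add_of_le hkp
    refine ⟨2 ^ t * j, ?_, ?_⟩
    · rw [pow_add, mul_comm]
      exact Nat.mul_lt_mul_of_pos_right hj (by positivity)
    · rw [← cantorLeft_add_pow_mul k t j]
      exact cantorLeft_mem_cantorInterval hdec hsum _ _
  · obtain ⟨t, rfl⟩ := Nat.exists_eq_add_of_le hpk
    refine ⟨j / 2 ^ t, ?_, cantorInterval_add_subset hdec hsum p t j
      (cantorLeft_mem_cantorInterval hdec hsum _ _)⟩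
    rwa [Nat.div_lt_iff_lt_mul (by positivity), ← pow_add]

lemma zero_mem_assocCantor : (0 : ℝ) ∈ assocCantor a :=
  cantorLeft_mem_assocCantor hdec hsum (k := 0) (j := 0) one_pos

lemma exists_lt_pow_mem_cantorInterval {x : ℝ} (hx : x ∈ assocCantor a) {k : ℕ}
    (hxk : x < cantorLeft a (k + 1) 1) (t : ℕ) :
    ∃ i < 2 ^ t, x ∈ cantorInterval a (k + 1 + t) i := by
  obtain ⟨i, hi, hxi⟩ := exists_mem_cantorInterval hx (k + 1 + t)
  refine ⟨i, lt_of_not_ge fun hti => hxk.not_ge ?_, hxi⟩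
  calc cantorLeft a (k + 1) 1 = cantorLeft a (k + 1 + t) (2 ^ t * 1) :=
        (cantorLeft_add_pow_mul _ _ _).symm
    _ ≤ cantorLeft a (k + 1 + t) i := cantorLeft_mono hdec hsum (by simpa using hti) hi
    _ ≤ x := hxi.1

end Nesting

section Covering

variable {r : ℝ} {F : Set ℝ}

lemma coverNum_le_card (S : Finset ℝ) (hS : F ⊆ ⋃ x ∈ S, Metric.closedBall x r) :
    coverNum r F ≤ S.card :=
  Nat.sInf_le ⟨S, rfl, hS⟩

/-- Centres spaced `2 * r` apart, starting at `x - R + r`. -/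
lemma exists_finset_cover_closedBall (hr : 0 < r) (x : ℝ) {R : ℝ} (hR : 0 ≤ R) :
    ∃ S : Finset ℝ, (S.card : ℝ) ≤ R / r + 2 ∧
      Metric.closedBall x R ⊆ ⋃ y ∈ S, Metric.closedBall y r := by
  classical
  set M := ⌈R / r⌉₊
  refine ⟨(Finset.range (M + 1)).image fun i : ℕ => x - R + (2 * i + 1) * r, ?_, ?_⟩
  · have hM : (M : ℝ) < R / r + 1 := Nat.ceil_lt_add_one (by positivity)
    refine (Nat.cast_le.mpr (Finset.card_image_le.trans (Finset.card_range _).le)).trans ?_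
    push_cast
    linarith
  · intro y hy
    rw [Real.closedBall_eq_Icc, mem_Icc] at hy
    set i := ⌊(y - (x - R)) / (2 * r)⌋₊
    have hi : (i : ℝ) ≤ (y - (x - R)) / (2 * r) := Nat.floor_le (by apply div_nonneg <;> linarith)
    have hi' : (y - (x - R)) / (2 * r) < i + 1 := Nat.lt_floor_add_one _
    rw [le_div_iff₀ (by positivity)] at hi
    rw [div_lt_iff₀ (by positivity)] at hi'
    have hiM : i < M + 1 := by
      have : (y - (x - R)) / (2 * r) ≤ M :=
        (div_le_div_of_nonneg_right (by linarith) (by positivity)).trans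
          ((by field_simp : 2 * R / (2 * r) = R / r).le.trans (Nat.le_ceil _))
      exact Nat.lt_succ_of_le (Nat.floor_le_of_le this)
    simp only [mem_iUnion, Finset.mem_image, Finset.mem_range, exists_prop]
    refine ⟨_, ⟨i, hiM, rfl⟩, ?_⟩
    rw [Real.closedBall_eq_Icc, mem_Icc]
    constructor <;> nlinarith

lemma coverNum_closedBall_inter_le (hr : 0 < r) (x : ℝ) {R : ℝ} (hR : 0 ≤ R) :
    (coverNum r (Metric.closedBall x R ∩ F) : ℝ) ≤ R / r + 2 := by
  obtain ⟨S, hS, hcover⟩ := exists_finset_cover_closedBall hr x hR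
  exact le_trans (by exact_mod_cast coverNum_le_card S (inter_subset_left.trans hcover)) hS

/-- Points of `F` more than `2 * r` apart need distinct covering balls. -/
lemma card_le_coverNum (hr : 0 < r) (hF : Bornology.IsBounded F) {M : ℕ} (p : Fin M → ℝ)
    (hpF : ∀ i, p i ∈ F) (hsep : ∀ i i', i < i' → p i + 2 * r < p i') : M ≤ coverNum r F := by
  obtain ⟨R, hR⟩ := hF.subset_closedBall 0
  obtain ⟨S₀, -, hS₀⟩ := exists_finset_cover_closedBall hr 0 (le_max_right R 0)
  refine le_csInf ⟨S₀.card, S₀, rfl, hR.trans ((Metric.closedBall_subset_closedBall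
    (le_max_left R 0)).trans hS₀)⟩ ?_
  rintro n ⟨S, rfl, hS⟩
  have hcentre : ∀ i, ∃ c ∈ S, dist (p i) c ≤ r := fun i => by
    simpa using hS (hpF i)
  choose c hcS hc using hcentre
  have hinj : Function.Injective c := by
    intro i i' hii'
    by_contra hne
    have hdist : dist (p i) (p i') ≤ 2 * r := by
      linarith [dist_triangle_right (p i) (p i') (c i), hc i, hii' ▸ hc i']
    rw [Real.dist_eq, abs_le] at hdist
    rcases lt_or_gt_of_ne hne with h | h
    · linarith [hsep i i' h]
    · linarith [hsep i' i h]
  simpa using Finset.card_le_card_of_injOn (s := Finset.univ) c (fun i _ => hcS i) hinj.injOn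

lemma one_le_coverNum (hr : 0 < r) (hF : Bornology.IsBounded F) (hne : F.Nonempty) :
    1 ≤ coverNum r F :=
  card_le_coverNum hr hF (fun _ : Fin 1 => hne.some) (fun _ => hne.some_mem)
    (fun i i' h => by omega)

end Covering

def lowerAssouadExponents (F : Set ℝ) : Set ℝ :=
  {α : ℝ | ∃ c > (0 : ℝ), ∃ ρ > (0 : ℝ), ∀ x ∈ F, ∀ r R : ℝ,
    0 < r → r < R → R < ρ →
    c * (R / r) ^ α ≤ (coverNum r (Metric.closedBall x R ∩ F) : ℝ)}

lemma dimL_eq_sSup (F : Set ℝ) : dimL F = sSup (lowerAssouadExponents F) := rfl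

lemma zero_mem_lowerAssouadExponents (F : Set ℝ) : (0 : ℝ) ∈ lowerAssouadExponents F := by
  refine ⟨1, one_pos, 1, one_pos, fun x hx r R hr hrR _ => ?_⟩
  rw [Real.rpow_zero, one_mul, Nat.one_le_cast]
  exact one_le_coverNum hr (Metric.isBounded_closedBall.subset inter_subset_left)
    ⟨x, Metric.mem_closedBall_self (by linarith), hx⟩

-- Because `N_r(B(x, R) ∩ F) ≤ R / r + 2`.
lemma le_one_of_mem_lowerAssouadExponents {F : Set ℝ} (hF : F.Nonempty) {α : ℝ}
    (hα : α ∈ lowerAssouadExponents F) : α ≤ 1 := by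
  obtain ⟨c, hc, ρ, hρ, hcover⟩ := hα
  by_contra! hα1
  obtain ⟨T₀, hT₀⟩ := eventually_atTop.mp
    ((tendsto_rpow_atTop (sub_pos.mpr hα1)).eventually_gt_atTop (3 / c))
  set T := max T₀ 2
  have hT : 2 ≤ T := le_max_right _ _
  obtain ⟨x, hx⟩ := hF
  have hbound := hcover x hx (ρ / 2 / T) (ρ / 2) (by positivity)
    (div_lt_self (by positivity) (by linarith)) (by linarith)
  have hRr : ρ / 2 / (ρ / 2 / T) = T := by field_simp
  rw [hRr] at hbound
  have hupper := coverNum_closedBall_inter_le (F := F) (by positivity : 0 < ρ / 2 / T) x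
    (by positivity : 0 ≤ ρ / 2)
  rw [hRr] at hupper
  have hpow : c * T ^ α = c * T ^ (α - 1) * T := by
    rw [mul_assoc, ← Real.rpow_add_one (by positivity), sub_add_cancel]
  have hbig : 3 < c * T ^ (α - 1) := by
    have := hT₀ T (le_max_left _ _)
    rwa [div_lt_iff₀ hc, mul_comm] at this
  nlinarith

lemma le_dimL {F : Set ℝ} (hF : F.Nonempty) {α : ℝ} (hα : α ∈ lowerAssouadExponents F) :
    α ≤ dimL F :=
  dimL_eq_sSup F ▸ le_csSup ⟨1, fun _ => le_one_of_mem_lowerAssouadExponents hF⟩ hα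

lemma dimL_le {F : Set ℝ} {β : ℝ} (h : ∀ α ∈ lowerAssouadExponents F, α ≤ β) : dimL F ≤ β :=
  dimL_eq_sSup F ▸ csSup_le ⟨0, zero_mem_lowerAssouadExponents F⟩ h

lemma frequently_lt_of_iInf_eq_zero {f : ℕ → ℝ} (hf : ∀ k, 0 < f k) (h : ⨅ k, f k = 0) {ε : ℝ}
    (hε : 0 < ε) : ∃ᶠ k in atTop, f k < ε := by
  by_contra hfreq
  obtain ⟨K, hK⟩ := eventually_atTop.mp (not_frequently.mp hfreq)
  set μ := min ε ((Finset.range (K + 1)).inf' Finset.nonempty_range_add_one f)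
  have hμ : 0 < μ := lt_min hε ((Finset.lt_inf'_iff _).mpr fun k _ => hf k)
  have hμf : ∀ k, μ ≤ f k := fun k => by
    rcases le_total k K with hk | hk
    · exact (min_le_right _ _).trans (Finset.inf'_le _ (Finset.mem_range_succ_iff.mpr hk))
    · exact (min_le_left _ _).trans (not_lt.mp (hK k hk))
  exact hμ.not_ge (h ▸ le_ciInf hμf)

lemma exists_avgLen_le {ε : ℝ} (hε : 0 < ε) (n : ℕ) :
    ∃ t, avgLen a (n + t) ≤ ε ∧ ∀ t' < t, ε < avgLen a (n + t') := by
  classical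
  obtain ⟨N, hN⟩ := eventually_atTop.mp (tendsto_avgLen.eventually (eventually_le_nhds hε))
  have hex : ∃ t, avgLen a (n + t) ≤ ε := ⟨N, hN _ (by omega)⟩
  exact ⟨Nat.find hex, Nat.find_spec hex, fun t' ht' => not_le.mp (Nat.find_min hex ht')⟩

lemma div_le_two_div_pow_of_mul_le_succ {u : ℕ → ℝ} {γ r R : ℝ} (hγ : 0 < γ)
    (hu : ∀ k, γ * u k ≤ u (k + 1)) {p n : ℕ} (hn : n ≠ 0) (hr : 0 < r) (hR : R < u p)
    (hrn : u (p + n) ≤ 2 * r) : R / r ≤ (2 / γ) ^ n := by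
  have hgeom : γ ^ n * u p ≤ u (p + n) := by
    simpa using geom_le (u := fun i => u (p + i)) hγ.le n fun i _ => hu (p + i)
  have h2 : (2 : ℝ) ≤ 2 ^ n := le_self_pow₀ one_le_two hn
  rw [div_pow, div_le_div_iff₀ hr (by positivity)]
  nlinarith [mul_lt_mul_of_pos_left hR (pow_pos hγ n), mul_le_mul_of_nonneg_right h2 hr.le]

section Dimension

variable (hdec : Antitone a) (hsum : Summable a)
include hdec hsum

/-- The left endpoints of the `2 ^ t` step-`(m + 1 + t)` intervals inside the step-`(m + 1)`
interval containing `x` are `2 * r`-separated points of `B(x, R) ∩ C_a`. -/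
lemma pow_le_coverNum_closedBall_inter_assocCantor {x : ℝ} (hx : x ∈ assocCantor a) {r R : ℝ}
    (hr : 0 < r) {m t : ℕ} (hR : avgLen a m ≤ R) (hr2 : 2 * r < avgLen a (m + t + 2)) :
    2 ^ t ≤ coverNum r (Metric.closedBall x R ∩ assocCantor a) := by
  obtain ⟨j, hj, hxj⟩ := exists_mem_cantorInterval hx (m + 1)
  have hidx : ∀ i : Fin (2 ^ t), 2 ^ t * j + i < 2 ^ (m + 1 + t) := fun i => by
    have : 2 ^ t * j + 2 ^ t ≤ 2 ^ t * 2 ^ (m + 1) := by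
      rw [← mul_add_one]; exact Nat.mul_le_mul_left _ hj
    rw [pow_add, mul_comm (2 ^ (m + 1))]
    omega
  have hball : cantorInterval a (m + 1) j ⊆ Metric.closedBall x R := fun y hy => by
    have hlen := cantorLen_succ_le_avgLen hdec hsum m j
    rw [Real.closedBall_eq_Icc]
    constructor <;> linarith [hy.1, hy.2, hxj.1, hxj.2]
  refine card_le_coverNum hr (Metric.isBounded_closedBall.subset inter_subset_left)
    (fun i => cantorLeft a (m + 1 + t) (2 ^ t * j + i))
    (fun i => ⟨hball ?_, cantorLeft_mem_assocCantor hdec hsum (hidx i)⟩) fun i i' hii' => ?_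
  · have := cantorInterval_add_subset hdec hsum (m + 1) t (2 ^ t * j + i)
      (cantorLeft_mem_cantorInterval hdec hsum _ _)
    rwa [Nat.mul_add_div (by positivity), Nat.div_eq_of_lt i.isLt, add_zero] at this
  · have hsep := cantorLeft_add_cantorLen_le hdec hsum (Nat.add_lt_add_left hii' _) (hidx i')
    have hlen := avgLen_succ_le_cantorLen hdec hsum (hidx i)
    rw [show m + 1 + t + 1 = m + t + 2 by ring] at hlen
    linarith

variable (hpos : ∀ n, 0 < a n)
include hpos

/-- Near `0`, the set `C_a` lies in `I_0^{k+1}`, which splits into `8` intervals of step `k + 4`. -/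
lemma coverNum_closedBall_zero_inter_assocCantor_le (k : ℕ) :
    coverNum (avgLen a (k + 3))
      (Metric.closedBall 0 (avgLen a (k + 2) / 2) ∩ assocCantor a) ≤ 8 := by
  classical
  set r := avgLen a (k + 3)
  refine (coverNum_le_card ((Finset.range 8).image fun i => cantorLeft a (k + 1 + 3) i + r)
    ?_).trans (Finset.card_image_le.trans (by simp))
  rintro y ⟨hyR, hyC⟩
  have hfirst : avgLen a (k + 2) ≤ cantorLeft a (k + 1) 1 := calc
    avgLen a (k + 2) ≤ cantorLeft a (k + 1) 0 + cantorLen a (k + 1) 0 := by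
      rw [cantorLeft_zero_right, zero_add]
      exact avgLen_succ_le_cantorLen hdec hsum (by positivity)
    _ ≤ cantorLeft a (k + 1) 1 :=
      cantorLeft_add_cantorLen_le hdec hsum zero_lt_one (Nat.one_lt_two_pow (by omega))
  rw [Real.closedBall_eq_Icc, mem_Icc] at hyR
  obtain ⟨i, hi, hyi⟩ := exists_lt_pow_mem_cantorInterval hdec hsum hyC
    (by linarith [avgLen_pos hsum hpos (k + 2)]) 3
  have hlen : cantorLen a (k + 1 + 3) i ≤ r := cantorLen_succ_le_avgLen hdec hsum (k + 3) i
  simp only [mem_iUnion, Finset.mem_image, Finset.mem_range, exists_prop]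
  refine ⟨_, ⟨i, hi, rfl⟩, ?_⟩
  rw [Real.closedBall_eq_Icc, mem_Icc]
  constructor <;> linarith [hyi.1, hyi.2]

lemma nonpos_of_mem_lowerAssouadExponents_assocCantor
    (hinf : ⨅ k, avgLen a (k + 1) / avgLen a k = 0) {α : ℝ}
    (hα : α ∈ lowerAssouadExponents (assocCantor a)) : α ≤ 0 := by
  obtain ⟨c, hc, ρ, hρ, hcover⟩ := hα
  by_contra! hα0
  set W := (9 / c) ^ α⁻¹
  have hW : 0 ≤ W := by positivity
  have hs := avgLen_pos hsum hpos
  obtain ⟨k, hk, hsmall, hk2⟩ :=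
    ((frequently_lt_of_iInf_eq_zero (fun k => div_pos (hs (k + 1)) (hs k)) hinf
      (by positivity : 0 < 1 / (2 * (W + 1)))).and_eventually
      (((tendsto_avgLen (a := a)).eventually (gt_mem_nhds (by positivity : 0 < 2 * ρ))).and
        (eventually_ge_atTop 2))).exists
  obtain ⟨k, rfl⟩ := Nat.exists_eq_add_of_le' hk2
  have hRr : W < avgLen a (k + 2) / 2 / avgLen a (k + 3) := by
    rw [div_lt_div_iff₀ (hs _) (by positivity), show k + 2 + 1 = k + 3 from rfl] at hk
    rw [lt_div_iff₀ (hs _)]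
    linarith [hs (k + 3)]
  have hbound := hcover 0 (zero_mem_assocCantor hdec hsum) (avgLen a (k + 3)) (avgLen a (k + 2) / 2)
    (hs _) (avgLen_succ_lt_half hsum hpos (k + 2)) (by linarith)
  have hpow : 9 / c < (avgLen a (k + 2) / 2 / avgLen a (k + 3)) ^ α := by
    calc 9 / c = W ^ α := (Real.rpow_inv_rpow (by positivity) hα0.ne').symm
      _ < _ := Real.rpow_lt_rpow hW hRr hα0
  rw [div_lt_iff₀ hc] at hpow
  have h8 : (coverNum (avgLen a (k + 3))
      (Metric.closedBall 0 (avgLen a (k + 2) / 2) ∩ assocCantor a) : ℝ) ≤ 8 := by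
    exact_mod_cast coverNum_closedBall_zero_inter_assocCantor_le hdec hsum hpos k
  linarith

/-- With `s_{k+1} ≥ γ s_k`, the exponent `α = log 2 / log (2 / γ)` works with `c = 1 / 16`:
choose `p` with `s_{p+1} ≤ R < s_p` and the first `t` with `s_{p+3+t} ≤ 2 r`; then
`R / r ≤ (2 / γ) ^ (t + 3)` while `N_r(B(x, R) ∩ C_a) ≥ 2 ^ t / 2`. -/
lemma exists_pos_mem_lowerAssouadExponents_assocCantor {γ : ℝ} (hγ : 0 < γ)
    (hγs : ∀ k, γ ≤ avgLen a (k + 1) / avgLen a k) :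
    ∃ α > 0, α ∈ lowerAssouadExponents (assocCantor a) := by
  have hs := avgLen_pos hsum hpos
  have hgrowth : ∀ k, γ * avgLen a k ≤ avgLen a (k + 1) := fun k => (le_div_iff₀ (hs k)).mp (hγs k)
  have hγ2 : γ < 2 := by nlinarith [hgrowth 0, avgLen_succ_lt_half hsum hpos 0, hs 0]
  set b := 2 / γ
  have hb : 1 < b := (one_lt_div hγ).mpr hγ2
  have hα : 0 < Real.logb b 2 := Real.logb_pos hb one_lt_two
  have hbα : b ^ Real.logb b 2 = 2 := Real.rpow_logb (by positivity) hb.ne' two_pos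
  refine ⟨Real.logb b 2, hα, 1 / 16, by norm_num, avgLen a 0, hs 0,
    fun x hx r R hr hrR hRs => ?_⟩
  obtain ⟨n, hn, hnmin⟩ := exists_avgLen_le (a := a) (hr.trans hrR) 0
  obtain ⟨p, rfl⟩ : ∃ p, n = p + 1 :=
    Nat.exists_eq_succ_of_ne_zero (by rintro rfl; simp at hn; linarith)
  have hRp : R < avgLen a p := by simpa using hnmin p (by omega)
  obtain ⟨t, ht, htmin⟩ := exists_avgLen_le (a := a) (by positivity : 0 < 2 * r) (p + 3)
  have hcount : 2 ^ t / 2 ≤ (coverNum r (Metric.closedBall x R ∩ assocCantor a) : ℝ) := by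
    rcases t with _ | t
    · have := one_le_coverNum hr (Metric.isBounded_closedBall.subset inter_subset_left)
        ⟨x, Metric.mem_closedBall_self (hr.trans hrR).le, hx⟩
      have : (1 : ℝ) ≤ coverNum r (Metric.closedBall x R ∩ assocCantor a) := by exact_mod_cast this
      linarith
    · have := pow_le_coverNum_closedBall_inter_assocCantor hdec hsum hx hr (m := p + 1) (t := t)
        (by simpa using hn) (by simpa [add_right_comm] using htmin t (by omega))
      rw [pow_succ, mul_div_cancel_right₀ _ two_ne_zero]
      exact_mod_cast this
  have hratio : R / r ≤ b ^ (t + 3) :=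
    div_le_two_div_pow_of_mul_le_succ hγ hgrowth (by omega) hr hRp
      (by rwa [← add_assoc, add_right_comm])
  have hpow : (R / r) ^ Real.logb b 2 ≤ 2 ^ (t + 3) := by
    calc (R / r) ^ Real.logb b 2 ≤ (b ^ (t + 3)) ^ Real.logb b 2 :=
          Real.rpow_le_rpow (div_pos (hr.trans hrR) hr).le hratio hα.le
      _ = 2 ^ (t + 3) := by rw [← Real.rpow_pow_comm (zero_lt_one.trans hb).le, hbα]
  calc 1 / 16 * (R / r) ^ Real.logb b 2 ≤ 1 / 16 * 2 ^ (t + 3) := by gcongr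
    _ = 2 ^ t / 2 := by ring
    _ ≤ _ := hcount

end Dimension

lemma gapTail_le_mul_gapTail_succ (ha : ∀ n, 0 ≤ a n) (hsum : Summable a) {τ : ℝ} (hτ : 0 ≤ τ)
    (hd : ∀ n, a n ≤ τ * a (2 * n + 1)) (k : ℕ) : gapTail a k ≤ τ * gapTail a (k + 1) := by
  have hidx : ∀ j, 2 * (2 ^ k - 1 + j) + 1 = 2 ^ (k + 1) - 1 + 2 * j := fun j => by
    have := Nat.one_le_two_pow (n := k)
    rw [pow_succ]
    omega
  have hsumEven : Summable fun j => a (2 ^ (k + 1) - 1 + 2 * j) :=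
    hsum.comp_injective fun _ _ h => by omega
  have hEven : ∑' j, a (2 ^ (k + 1) - 1 + 2 * j) ≤ gapTail a (k + 1) :=
    tsum_comp_le_tsum_of_inj (hsum.comp_injective (add_right_injective _)) (fun _ => ha _)
      (i := fun j => 2 * j) fun _ _ h => by simp only at h; omega
  have hsumTail : Summable fun j => a (2 ^ k - 1 + j) := hsum.comp_injective (add_right_injective _)
  calc gapTail a k ≤ ∑' j, τ * a (2 ^ (k + 1) - 1 + 2 * j) :=
        hsumTail.tsum_le_tsum (fun j => hidx j ▸ hd _) (hsumEven.mul_left τ)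
    _ = τ * ∑' j, a (2 ^ (k + 1) - 1 + 2 * j) := tsum_mul_left
    _ ≤ τ * gapTail a (k + 1) := by gcongr

lemma exists_le_avgLen_div_of_isDoubling (hpos : ∀ n, 0 < a n) (hsum : Summable a)
    (hd : IsDoubling a) : ∃ γ > 0, ∀ k, γ ≤ avgLen a (k + 1) / avgLen a k := by
  obtain ⟨τ, hτ⟩ := hd
  have hτpos : 0 < τ := by nlinarith [hτ 0, hpos 0, hpos 1]
  refine ⟨1 / (2 * τ), by positivity, fun k => ?_⟩
  have htail := gapTail_le_mul_gapTail_succ (fun n => (hpos n).le) hsum hτpos.le hτ k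
  have hg := gapTail_pos hsum hpos k
  rw [avgLen_eq_gapTail_div, avgLen_eq_gapTail_div, pow_succ, div_div_div_eq, div_le_div_iff₀
    (by positivity) (by positivity)]
  nlinarith [pow_pos (two_pos : (0 : ℝ) < 2) k]

/-- `dim_L C_a = 0` iff `inf_k s_{k+1}/s_k = 0`; in particular a
doubling sequence has `dim_L C_a > 0`. -/
theorem dimL_assocCantor_eq_zero_iff
    (a : ℕ → ℝ) (hpos : ∀ n, 0 < a n) (hdec : Antitone a) (hsum : Summable a) :
    (dimL (assocCantor a) = 0 ↔ (⨅ k : ℕ, avgLen a (k + 1) / avgLen a k) = 0) ∧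
    (IsDoubling a → 0 < dimL (assocCantor a)) := by
  have hC : (assocCantor a).Nonempty := ⟨0, zero_mem_assocCantor hdec hsum⟩
  have hratio : ∀ k, 0 ≤ avgLen a (k + 1) / avgLen a k := fun k =>
    (div_pos (avgLen_pos hsum hpos _) (avgLen_pos hsum hpos _)).le
  have dimL_pos : ∀ γ > 0, (∀ k, γ ≤ avgLen a (k + 1) / avgLen a k) → 0 < dimL (assocCantor a) :=
    fun γ hγ hγs => by
      obtain ⟨α, hα, hαC⟩ :=
        exists_pos_mem_lowerAssouadExponents_assocCantor hdec hsum hpos hγ hγs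
      exact hα.trans_le (le_dimL hC hαC)
  refine ⟨⟨fun hdim => ?_, fun hinf => ?_⟩, fun hd => ?_⟩
  · by_contra hinf
    exact (dimL_pos _ ((le_ciInf hratio).lt_of_ne' hinf)
      (ciInf_le ⟨0, forall_mem_range.2 hratio⟩)).ne' hdim
  · exact le_antisymm
      (dimL_le fun α => nonpos_of_mem_lowerAssouadExponents_assocCantor hdec hsum hpos hinf)
      (le_dimL hC (zero_mem_lowerAssouadExponents _))
  · obtain ⟨γ, hγ, hγs⟩ := exists_le_avgLen_div_of_isDoubling hpos hsum hd
    exact dimL_pos γ hγ hγs
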